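/- arXiv:2403.01660 — 2 statements merged into one kernel-verified Lean document; each statement's English description precedes it below -/
import Mathlib

section
/- The Risk distance satisfies the triangle inequality: for problems P₁, P₂, P₃ (with Polish input/response spaces), d_R(P₁,P₃) ≤ d_R(P₁,P₂) + d_R(P₂,P₃). -/
open MeasureTheory
open scoped ENNReal NNReal

/-- `eabs a b = |a - b|` for extended nonnegative reals. -/
noncomputable def eabs (a b : ℝ≥0∞) : ℝ≥0∞ := (a - b) ⊔ (b - a)

/-- The conditions on the data `(η, ℓ, H)` of a supervised learning problem:
`η` is a probability measure (the joint law), the loss `ℓ` is measurable, and the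
predictors in `H` are measurable with finite risk. -/
def IsProblem {X Y : Type*} [MeasurableSpace X] [MeasurableSpace Y]
    (η : Measure (X × Y)) (ℓ : Y → Y → ℝ≥0) (H : Set (X → Y)) : Prop :=
  IsProbabilityMeasure η ∧ Measurable (Function.uncurry ℓ) ∧
    (∀ h ∈ H, Measurable h) ∧
    ∀ h ∈ H, ∫⁻ z, (ℓ (h z.1) z.2 : ℝ≥0∞) ∂η < ⊤

/-- The Risk distance between the problems `(η, ℓ, H)` on `X × Y` and `(η', ℓ', H')` on
`X' × Y'`: the infimum, over couplings `γ` of `η` and `η'` and correspondences `R`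
between `H` and `H'`, of the risk distortion
`sup_{(h,h') ∈ R} ∫ |ℓ(h(x),y) - ℓ'(h'(x'),y')| dγ`. -/
noncomputable def riskDist {X Y X' Y' : Type*} [MeasurableSpace X] [MeasurableSpace Y]
    [MeasurableSpace X'] [MeasurableSpace Y']
    (η : Measure (X × Y)) (ℓ : Y → Y → ℝ≥0) (H : Set (X → Y))
    (η' : Measure (X' × Y')) (ℓ' : Y' → Y' → ℝ≥0) (H' : Set (X' → Y')) : ℝ≥0∞ :=
  ⨅ (γ : Measure ((X × Y) × (X' × Y')))
      (_ : γ.map Prod.fst = η ∧ γ.map Prod.snd = η'),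
    ⨅ (R : Set ((X → Y) × (X' → Y')))
        (_ : (∀ p ∈ R, p.1 ∈ H ∧ p.2 ∈ H') ∧ (∀ h ∈ H, ∃ h' ∈ H', (h, h') ∈ R) ∧
          ∀ h' ∈ H', ∃ h ∈ H, (h, h') ∈ R),
      ⨆ p ∈ R, ∫⁻ z, eabs (ℓ (p.1 z.1.1) z.1.2) (ℓ' (p.2 z.2.1) z.2.2) ∂γ

/-!
Glue a coupling of `η₁, η₂` and a coupling of `η₂, η₃` along `η₂`, by disintegrating the
second one over its first coordinate, and compose the correspondences as relations. If `h₁`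
and `h₃` are related through `h₂`, the triangle inequality for `|a - b|` inside the integral
against the glued measure bounds the distortion of `(h₁, h₃)` by the sum of the two
distortions. Taking infima gives the triangle inequality for `riskDist`.
-/

open ProbabilityTheory SetRel

lemma eabs_triangle (a b c : ℝ≥0∞) : eabs a c ≤ eabs a b + eabs b c :=
  sup_le (tsub_le_tsub_add_tsub.trans (add_le_add le_sup_left le_sup_left))
    ((tsub_le_tsub_add_tsub.trans_eq (add_comm _ _)).trans (add_le_add le_sup_right le_sup_right))

lemma Measurable.eabs {α : Type*} [MeasurableSpace α] {f g : α → ℝ≥0∞}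
    (hf : Measurable f) (hg : Measurable g) : Measurable fun a => eabs (f a) (g a) :=
  (hf.sub hg).sup (hg.sub hf)

lemma Measurable.coe_loss {X Y : Type*} [MeasurableSpace X] [MeasurableSpace Y]
    {ℓ : Y → Y → ℝ≥0} {h : X → Y} (hℓ : Measurable (Function.uncurry ℓ)) (hh : Measurable h) :
    Measurable fun z : X × Y => (ℓ (h z.1) z.2 : ℝ≥0∞) :=
  measurable_coe_nnreal_ennreal.comp (hℓ.comp ((hh.comp measurable_fst).prodMk measurable_snd))

section Gluing

variable {α β γ : Type*} [MeasurableSpace α] [MeasurableSpace β] [MeasurableSpace γ]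

def IsCoupling (ρ : Measure (α × β)) (μ : Measure α) (ν : Measure β) : Prop :=
  ρ.fst = μ ∧ ρ.snd = ν

lemma Measure.map_compProd_comap (μ : Measure α) [SFinite μ] (κ : Kernel β γ)
    [IsSFiniteKernel κ] {f : α → β} (hf : Measurable f) :
    (μ ⊗ₘ κ.comap f hf).map (fun p => (f p.1, p.2)) = μ.map f ⊗ₘ κ := by
  ext s hs
  have hm : Measurable fun p : α × γ => (f p.1, p.2) :=
    (hf.comp measurable_fst).prodMk measurable_snd
  rw [Measure.map_apply hm hs, Measure.compProd_apply (hm hs), Measure.compProd_apply hs,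
    lintegral_map (Kernel.measurable_kernel_prodMk_left hs) hf]
  rfl

lemma IsCoupling.exists_glue [StandardBorelSpace γ] [Nonempty γ] {ρ₁₂ : Measure (α × β)}
    {ρ₂₃ : Measure (β × γ)} {μ : Measure α} {ν : Measure β} {ξ : Measure γ}
    [IsFiniteMeasure ν] (h₁₂ : IsCoupling ρ₁₂ μ ν) (h₂₃ : IsCoupling ρ₂₃ ν ξ) :
    ∃ π : Measure ((α × β) × γ), π.fst = ρ₁₂ ∧ π.map (fun p => (p.1.2, p.2)) = ρ₂₃ := by
  have : IsFiniteMeasure ρ₁₂ := by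
    rw [← Measure.isFiniteMeasure_map_iff measurable_snd.aemeasurable, ← Measure.snd, h₁₂.2]
    infer_instance
  have : IsFiniteMeasure ρ₂₃ := by
    rw [← Measure.isFiniteMeasure_map_iff measurable_fst.aemeasurable, ← Measure.fst, h₂₃.1]
    infer_instance
  refine ⟨ρ₁₂ ⊗ₘ ρ₂₃.condKernel.comap Prod.snd measurable_snd, Measure.fst_compProd _ _, ?_⟩
  rw [Measure.map_compProd_comap, ← Measure.snd, h₁₂.2, ← h₂₃.1, Measure.disintegrate]

lemma IsCoupling.map_glue {π : Measure ((α × β) × γ)} {μ : Measure α} {ν : Measure β}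
    {ξ : Measure γ} (h₁₂ : IsCoupling π.fst μ ν)
    (h₂₃ : IsCoupling (π.map fun p => (p.1.2, p.2)) ν ξ) :
    IsCoupling (π.map fun p => (p.1.1, p.2)) μ ξ := by
  refine ⟨?_, ?_⟩
  · rw [← h₁₂.1, Measure.fst_map_prodMk measurable_snd, Measure.fst, Measure.fst,
      Measure.map_map measurable_fst measurable_fst]
    rfl
  · rw [← h₂₃.2, Measure.snd_map_prodMk measurable_fst.fst,
      Measure.snd_map_prodMk measurable_fst.snd]

lemma lintegral_eabs_glue_le (π : Measure ((α × β) × γ)) {f : α → ℝ≥0∞} {g : β → ℝ≥0∞}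
    {k : γ → ℝ≥0∞} (hf : Measurable f) (hg : Measurable g) (hk : Measurable k) :
    ∫⁻ z, eabs (f z.1) (k z.2) ∂(π.map fun p => (p.1.1, p.2)) ≤
      ∫⁻ z, eabs (f z.1) (g z.2) ∂π.fst +
        ∫⁻ z, eabs (g z.1) (k z.2) ∂(π.map fun p => (p.1.2, p.2)) := by
  have hfg : Measurable fun z : α × β => eabs (f z.1) (g z.2) :=
    (hf.comp measurable_fst).eabs (hg.comp measurable_snd)
  have hgk : Measurable fun z : β × γ => eabs (g z.1) (k z.2) :=
    (hg.comp measurable_fst).eabs (hk.comp measurable_snd)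
  have h₂₃ : Measurable fun p : (α × β) × γ => (p.1.2, p.2) :=
    measurable_fst.snd.prodMk measurable_snd
  calc ∫⁻ z, eabs (f z.1) (k z.2) ∂(π.map fun p => (p.1.1, p.2))
      ≤ ∫⁻ p, eabs (f p.1.1) (k p.2) ∂π :=
        lintegral_map_le (fun z : α × γ => eabs (f z.1) (k z.2)) _
    _ ≤ ∫⁻ p, eabs (f p.1.1) (g p.1.2) + eabs (g p.1.2) (k p.2) ∂π :=
        lintegral_mono fun _ => eabs_triangle _ _ _
    _ = ∫⁻ p, eabs (f p.1.1) (g p.1.2) ∂π + ∫⁻ p, eabs (g p.1.2) (k p.2) ∂π :=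
        lintegral_add_left (hfg.comp measurable_fst) _
    _ = _ := by rw [Measure.fst, lintegral_map hfg measurable_fst, lintegral_map hgk h₂₃]

end Gluing

section Correspondence

variable {α β γ : Type*}

def IsCorrespondence (R : SetRel α β) (A : Set α) (B : Set β) : Prop :=
  (∀ p ∈ R, p.1 ∈ A ∧ p.2 ∈ B) ∧ (∀ a ∈ A, ∃ b ∈ B, (a, b) ∈ R) ∧ ∀ b ∈ B, ∃ a ∈ A, (a, b) ∈ R

lemma IsCorrespondence.comp {R : SetRel α β} {S : SetRel β γ} {A : Set α} {B : Set β}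
    {C : Set γ} (hR : IsCorrespondence R A B) (hS : IsCorrespondence S B C) :
    IsCorrespondence (R ○ S) A C := by
  refine ⟨fun p ⟨b, hab, hbc⟩ => ⟨(hR.1 _ hab).1, (hS.1 _ hbc).2⟩, fun a ha => ?_, fun c hc => ?_⟩
  · obtain ⟨b, hb, hab⟩ := hR.2.1 a ha
    obtain ⟨c, hc, hbc⟩ := hS.2.1 b hb
    exact ⟨c, hc, b, hab, hbc⟩
  · obtain ⟨b, hb, hbc⟩ := hS.2.2 c hc
    obtain ⟨a, ha, hab⟩ := hR.2.2 b hb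
    exact ⟨a, ha, b, hab, hbc⟩

end Correspondence

section RiskDistortion

variable {X₁ Y₁ X₂ Y₂ X₃ Y₃ : Type*} [MeasurableSpace X₁] [MeasurableSpace Y₁]
  [MeasurableSpace X₂] [MeasurableSpace Y₂] [MeasurableSpace X₃] [MeasurableSpace Y₃]

noncomputable def riskDistortion (ℓ : Y₁ → Y₁ → ℝ≥0) (ℓ' : Y₂ → Y₂ → ℝ≥0)
    (γ : Measure ((X₁ × Y₁) × (X₂ × Y₂))) (R : SetRel (X₁ → Y₁) (X₂ → Y₂)) : ℝ≥0∞ :=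
  ⨆ p ∈ R, ∫⁻ z, eabs (ℓ (p.1 z.1.1) z.1.2) (ℓ' (p.2 z.2.1) z.2.2) ∂γ

lemma riskDist_eq_iInf (η : Measure (X₁ × Y₁)) (ℓ : Y₁ → Y₁ → ℝ≥0) (H : Set (X₁ → Y₁))
    (η' : Measure (X₂ × Y₂)) (ℓ' : Y₂ → Y₂ → ℝ≥0) (H' : Set (X₂ → Y₂)) :
    riskDist η ℓ H η' ℓ' H' =
      ⨅ (γ) (_ : IsCoupling γ η η') (R) (_ : IsCorrespondence R H H'),
        riskDistortion ℓ ℓ' γ R :=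
  rfl

lemma riskDist_le_riskDistortion {η : Measure (X₁ × Y₁)} {ℓ : Y₁ → Y₁ → ℝ≥0}
    {H : Set (X₁ → Y₁)} {η' : Measure (X₂ × Y₂)} {ℓ' : Y₂ → Y₂ → ℝ≥0} {H' : Set (X₂ → Y₂)}
    {γ : Measure ((X₁ × Y₁) × (X₂ × Y₂))} {R : SetRel (X₁ → Y₁) (X₂ → Y₂)}
    (hγ : IsCoupling γ η η') (hR : IsCorrespondence R H H') :
    riskDist η ℓ H η' ℓ' H' ≤ riskDistortion ℓ ℓ' γ R := by
  rw [riskDist_eq_iInf]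
  exact iInf₂_le_of_le γ hγ (iInf₂_le R hR)

lemma riskDistortion_glue_le {ℓ₁ : Y₁ → Y₁ → ℝ≥0} {ℓ₂ : Y₂ → Y₂ → ℝ≥0}
    {ℓ₃ : Y₃ → Y₃ → ℝ≥0} {H₁ : Set (X₁ → Y₁)} {H₂ : Set (X₂ → Y₂)} {H₃ : Set (X₃ → Y₃)}
    (hℓ₁ : Measurable (Function.uncurry ℓ₁)) (hℓ₂ : Measurable (Function.uncurry ℓ₂))
    (hℓ₃ : Measurable (Function.uncurry ℓ₃)) (hH₁ : ∀ h ∈ H₁, Measurable h)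
    (hH₂ : ∀ h ∈ H₂, Measurable h) (hH₃ : ∀ h ∈ H₃, Measurable h)
    {R₁₂ : SetRel (X₁ → Y₁) (X₂ → Y₂)} {R₂₃ : SetRel (X₂ → Y₂) (X₃ → Y₃)}
    (hR₁₂ : IsCorrespondence R₁₂ H₁ H₂) (hR₂₃ : IsCorrespondence R₂₃ H₂ H₃)
    (π : Measure (((X₁ × Y₁) × (X₂ × Y₂)) × (X₃ × Y₃))) :
    riskDistortion ℓ₁ ℓ₃ (π.map fun p => (p.1.1, p.2)) (R₁₂ ○ R₂₃) ≤
      riskDistortion ℓ₁ ℓ₂ π.fst R₁₂ +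
        riskDistortion ℓ₂ ℓ₃ (π.map fun p => (p.1.2, p.2)) R₂₃ := by
  refine iSup₂_le fun ⟨h₁, h₃⟩ ⟨h₂, h₁₂, h₂₃⟩ => ?_
  calc _ ≤ _ := lintegral_eabs_glue_le π (hℓ₁.coe_loss (hH₁ _ (hR₁₂.1 _ h₁₂).1))
        (hℓ₂.coe_loss (hH₂ _ (hR₂₃.1 _ h₂₃).1)) (hℓ₃.coe_loss (hH₃ _ (hR₂₃.1 _ h₂₃).2))
    _ ≤ _ := add_le_add
        (le_biSup (fun p => ∫⁻ z, eabs (ℓ₁ (p.1 z.1.1) z.1.2) (ℓ₂ (p.2 z.2.1) z.2.2) ∂π.fst) h₁₂)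
        (le_biSup (fun p => ∫⁻ z, eabs (ℓ₂ (p.1 z.1.1) z.1.2) (ℓ₃ (p.2 z.2.1) z.2.2)
          ∂(π.map fun p => (p.1.2, p.2))) h₂₃)

end RiskDistortion

theorem riskDist_triangle_general {X₁ Y₁ X₂ Y₂ X₃ Y₃ : Type*}
    [MeasurableSpace X₁] [MeasurableSpace Y₁] [MeasurableSpace X₂] [MeasurableSpace Y₂]
    [MeasurableSpace X₃] [TopologicalSpace X₃] [PolishSpace X₃] [BorelSpace X₃]
    [MeasurableSpace Y₃] [TopologicalSpace Y₃] [PolishSpace Y₃] [BorelSpace Y₃]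
    (η₁ : Measure (X₁ × Y₁)) (ℓ₁ : Y₁ → Y₁ → ℝ≥0) (H₁ : Set (X₁ → Y₁))
    (η₂ : Measure (X₂ × Y₂)) (ℓ₂ : Y₂ → Y₂ → ℝ≥0) (H₂ : Set (X₂ → Y₂))
    (η₃ : Measure (X₃ × Y₃)) (ℓ₃ : Y₃ → Y₃ → ℝ≥0) (H₃ : Set (X₃ → Y₃))
    (hP₁ : IsProblem η₁ ℓ₁ H₁) (hP₂ : IsProblem η₂ ℓ₂ H₂) (hP₃ : IsProblem η₃ ℓ₃ H₃) :
    riskDist η₁ ℓ₁ H₁ η₃ ℓ₃ H₃ ≤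
      riskDist η₁ ℓ₁ H₁ η₂ ℓ₂ H₂ + riskDist η₂ ℓ₂ H₂ η₃ ℓ₃ H₃ := by
  obtain ⟨-, hℓ₁, hH₁, -⟩ := hP₁
  obtain ⟨hη₂, hℓ₂, hH₂, -⟩ := hP₂
  obtain ⟨hη₃, hℓ₃, hH₃, -⟩ := hP₃
  have : Nonempty (X₃ × Y₃) := nonempty_of_isProbabilityMeasure η₃
  rw [riskDist_eq_iInf η₁ ℓ₁ H₁ η₂, riskDist_eq_iInf η₂ ℓ₂ H₂ η₃]
  simp only [ENNReal.iInf_add, ENNReal.add_iInf, le_iInf_iff]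
  intro γ₂₃ hγ₂₃ R₂₃ hR₂₃ γ₁₂ hγ₁₂ R₁₂ hR₁₂
  obtain ⟨π, hπ₁₂, hπ₂₃⟩ := hγ₁₂.exists_glue hγ₂₃
  calc riskDist η₁ ℓ₁ H₁ η₃ ℓ₃ H₃
      ≤ riskDistortion ℓ₁ ℓ₃ (π.map fun p => (p.1.1, p.2)) (R₁₂ ○ R₂₃) :=
        riskDist_le_riskDistortion ((hπ₁₂ ▸ hγ₁₂).map_glue (hπ₂₃ ▸ hγ₂₃)) (hR₁₂.comp hR₂₃)
    _ ≤ riskDistortion ℓ₁ ℓ₂ γ₁₂ R₁₂ + riskDistortion ℓ₂ ℓ₃ γ₂₃ R₂₃ := by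
        rw [← hπ₁₂, ← hπ₂₃]
        exact riskDistortion_glue_le hℓ₁ hℓ₂ hℓ₃ hH₁ hH₂ hH₃ hR₁₂ hR₂₃ π

/-- The Risk distance satisfies the triangle inequality: for problems `P₁, P₂, P₃`
with Polish input and response spaces, `d_R(P₁,P₃) ≤ d_R(P₁,P₂) + d_R(P₂,P₃)`. -/
theorem riskDist_triangle {X₁ Y₁ X₂ Y₂ X₃ Y₃ : Type*}
    [MeasurableSpace X₁] [TopologicalSpace X₁] [PolishSpace X₁] [BorelSpace X₁]
    [MeasurableSpace Y₁] [TopologicalSpace Y₁] [PolishSpace Y₁] [BorelSpace Y₁]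
    [MeasurableSpace X₂] [TopologicalSpace X₂] [PolishSpace X₂] [BorelSpace X₂]
    [MeasurableSpace Y₂] [TopologicalSpace Y₂] [PolishSpace Y₂] [BorelSpace Y₂]
    [MeasurableSpace X₃] [TopologicalSpace X₃] [PolishSpace X₃] [BorelSpace X₃]
    [MeasurableSpace Y₃] [TopologicalSpace Y₃] [PolishSpace Y₃] [BorelSpace Y₃]
    (η₁ : Measure (X₁ × Y₁)) (ℓ₁ : Y₁ → Y₁ → ℝ≥0) (H₁ : Set (X₁ → Y₁))
    (η₂ : Measure (X₂ × Y₂)) (ℓ₂ : Y₂ → Y₂ → ℝ≥0) (H₂ : Set (X₂ → Y₂))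
    (η₃ : Measure (X₃ × Y₃)) (ℓ₃ : Y₃ → Y₃ → ℝ≥0) (H₃ : Set (X₃ → Y₃))
    (hP₁ : IsProblem η₁ ℓ₁ H₁) (hP₂ : IsProblem η₂ ℓ₂ H₂) (hP₃ : IsProblem η₃ ℓ₃ H₃) :
    riskDist η₁ ℓ₁ H₁ η₃ ℓ₃ H₃ ≤
      riskDist η₁ ℓ₁ H₁ η₂ ℓ₂ H₂ + riskDist η₂ ℓ₂ H₂ η₃ ℓ₃ H₃ :=
  riskDist_triangle_general η₁ ℓ₁ H₁ η₂ ℓ₂ H₂ η₃ ℓ₃ H₃ hP₁ hP₂ hP₃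
end

section
/- If problem P' is a simulation of problem P, then the Risk distance between them is zero: d_R(P,P') = 0. -/
open MeasureTheory
open scoped ENNReal NNReal

/-!
Couple `η` with `η'` along the graph `z' ↦ ((f₁ × f₂) z', z')` and relate `h ∈ H` to `h' ∈ H'`
whenever their losses agree `η'`-almost everywhere. Under this coupling the integrand of the risk
distortion of a related pair is `|ℓ(h(f₁ x'), f₂ y') - ℓ'(h'(x'), y')|`, which vanishes
`η'`-almost everywhere.
-/

lemma eabs_self (a : ℝ≥0∞) : eabs a a = 0 := by
  simp [eabs]

lemma riskDist_le_of_coupling {X Y X' Y' : Type*} [MeasurableSpace X] [MeasurableSpace Y]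
    [MeasurableSpace X'] [MeasurableSpace Y']
    {η : Measure (X × Y)} {ℓ : Y → Y → ℝ≥0} {H : Set (X → Y)}
    {η' : Measure (X' × Y')} {ℓ' : Y' → Y' → ℝ≥0} {H' : Set (X' → Y')}
    (γ : Measure ((X × Y) × (X' × Y'))) (hγ : γ.map Prod.fst = η ∧ γ.map Prod.snd = η')
    (R : Set ((X → Y) × (X' → Y')))
    (hR : (∀ p ∈ R, p.1 ∈ H ∧ p.2 ∈ H') ∧ (∀ h ∈ H, ∃ h' ∈ H', (h, h') ∈ R) ∧
      ∀ h' ∈ H', ∃ h ∈ H, (h, h') ∈ R) :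
    riskDist η ℓ H η' ℓ' H' ≤
      ⨆ p ∈ R, ∫⁻ z, eabs (ℓ (p.1 z.1.1) z.1.2) (ℓ' (p.2 z.2.1) z.2.2) ∂γ :=
  iInf₂_le_of_le γ hγ (iInf₂_le R hR)

lemma lintegral_map_eq_zero_of_ae_comp_eq_zero {α β : Type*} [MeasurableSpace α]
    [MeasurableSpace β] {μ : Measure α} {g : α → β} {F : β → ℝ≥0∞}
    (hF : ∀ᵐ a ∂μ, F (g a) = 0) : ∫⁻ b, F b ∂μ.map g = 0 :=
  nonpos_iff_eq_zero.1 <|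
    (lintegral_map_le F g).trans_eq ((lintegral_congr_ae hF).trans lintegral_zero)

theorem riskDist_eq_zero_of_simulation_general {X Y X' Y' : Type*}
    [MeasurableSpace X] [MeasurableSpace Y] [MeasurableSpace X'] [MeasurableSpace Y']
    (η : Measure (X × Y)) (ℓ : Y → Y → ℝ≥0) (H : Set (X → Y))
    (η' : Measure (X' × Y')) (ℓ' : Y' → Y' → ℝ≥0) (H' : Set (X' → Y'))
    (f₁ : X' → X) (f₂ : Y' → Y) (hf₁ : Measurable f₁) (hf₂ : Measurable f₂)
    (hpush : η'.map (Prod.map f₁ f₂) = η)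
    (hsim₁ : ∀ h ∈ H, ∃ h' ∈ H',
      ∀ᵐ z ∂η', ℓ' (h' z.1) z.2 = ℓ (h (f₁ z.1)) (f₂ z.2))
    (hsim₂ : ∀ h' ∈ H', ∃ h ∈ H,
      ∀ᵐ z ∂η', ℓ' (h' z.1) z.2 = ℓ (h (f₁ z.1)) (f₂ z.2)) :
    riskDist η ℓ H η' ℓ' H' = 0 := by
  set R : Set ((X → Y) × (X' → Y')) :=
    {p | p.1 ∈ H ∧ p.2 ∈ H' ∧ ∀ᵐ z ∂η', ℓ' (p.2 z.1) z.2 = ℓ (p.1 (f₁ z.1)) (f₂ z.2)}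
  set γ := η'.map fun z => (Prod.map f₁ f₂ z, z)
  have hγ : γ.map Prod.fst = η ∧ γ.map Prod.snd = η' :=
    ⟨(Measure.fst_map_prodMk measurable_id).trans hpush,
      (Measure.snd_map_prodMk (hf₁.prodMap hf₂)).trans Measure.map_id⟩
  have hR : (∀ p ∈ R, p.1 ∈ H ∧ p.2 ∈ H') ∧ (∀ h ∈ H, ∃ h' ∈ H', (h, h') ∈ R) ∧
      ∀ h' ∈ H', ∃ h ∈ H, (h, h') ∈ R :=
    ⟨fun _ hp => ⟨hp.1, hp.2.1⟩,
      fun h hh => (hsim₁ h hh).imp fun _ ⟨hh', hloss⟩ => ⟨hh', hh, hh', hloss⟩,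
      fun h' hh' => (hsim₂ h' hh').imp fun _ ⟨hh, hloss⟩ => ⟨hh, hh, hh', hloss⟩⟩
  refine nonpos_iff_eq_zero.1 ((riskDist_le_of_coupling γ hγ R hR).trans_eq ?_)
  refine iSup₂_eq_bot.2 fun p ⟨_, _, hloss⟩ => lintegral_map_eq_zero_of_ae_comp_eq_zero ?_
  filter_upwards [hloss] with z hz
  simp [hz, eabs_self]

/-- If `P' = (X',Y',η',ℓ',H')` is a simulation of `P = (X,Y,η,ℓ,H)` (via measurable
maps `f₁ : X' → X`, `f₂ : Y' → Y` with `(f₁×f₂)_♯ η' = η` such that predictors on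
both sides match losses `η'`-a.e.), then the Risk distance between them is zero. -/
theorem riskDist_eq_zero_of_simulation {X Y X' Y' : Type*}
    [MeasurableSpace X] [TopologicalSpace X] [PolishSpace X] [BorelSpace X]
    [MeasurableSpace Y] [TopologicalSpace Y] [PolishSpace Y] [BorelSpace Y]
    [MeasurableSpace X'] [TopologicalSpace X'] [PolishSpace X'] [BorelSpace X']
    [MeasurableSpace Y'] [TopologicalSpace Y'] [PolishSpace Y'] [BorelSpace Y']
    (η : Measure (X × Y)) (ℓ : Y → Y → ℝ≥0) (H : Set (X → Y))
    (η' : Measure (X' × Y')) (ℓ' : Y' → Y' → ℝ≥0) (H' : Set (X' → Y'))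
    (hP : IsProblem η ℓ H) (hP' : IsProblem η' ℓ' H')
    (f₁ : X' → X) (f₂ : Y' → Y) (hf₁ : Measurable f₁) (hf₂ : Measurable f₂)
    (hpush : η'.map (Prod.map f₁ f₂) = η)
    (hsim₁ : ∀ h ∈ H, ∃ h' ∈ H',
      ∀ᵐ z ∂η', ℓ' (h' z.1) z.2 = ℓ (h (f₁ z.1)) (f₂ z.2))
    (hsim₂ : ∀ h' ∈ H', ∃ h ∈ H,
      ∀ᵐ z ∂η', ℓ' (h' z.1) z.2 = ℓ (h (f₁ z.1)) (f₂ z.2)) :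
    riskDist η ℓ H η' ℓ' H' = 0 :=
  riskDist_eq_zero_of_simulation_general η ℓ H η' ℓ' H' f₁ f₂ hf₁ hf₂ hpush hsim₁ hsim₂
end
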